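/- Let P be an incomplete weighted profile over a finite set of candidates. Then the fair weak Condorcet winners coincide with the weak Condorcet winners: FWC(P) = WC(P). That is, there is a completion of P in which a candidate wins every balanced agenda if and only if there is a completion in which it wins every agenda. -/

import Mathlib

open scoped Classical

/-- An agenda: a binary tree whose leaves are labelled with candidates. -/
inductive Agenda (α : Type) : Type
  | leaf (a : α) : Agenda α
  | node (l r : Agenda α) : Agenda α

namespace Agenda

/-- The list of leaf labels of an agenda. -/
def leaves {α : Type} : Agenda α → List α
  | leaf a => [a]
  | node l r => leaves l ++ leaves r

/-- The list of depths of the leaves of an agenda. -/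
def depths {α : Type} : Agenda α → List ℕ
  | leaf _ => [0]
  | node l r => (depths l ++ depths r).map (· + 1)

end Agenda

/-- A valid agenda: leaves labelled bijectively with the candidates. -/
def IsAgenda {α : Type} [Fintype α] (t : Agenda α) : Prop :=
  t.leaves.Nodup ∧ ∀ a : α, a ∈ t.leaves

/-- A balanced agenda: max and min leaf depths differ by at most 1. -/
def IsBalanced {α : Type} (t : Agenda α) : Prop :=
  ∀ d₁ ∈ t.depths, ∀ d₂ ∈ t.depths, d₁ ≤ d₂ + 1

/-- A tournament: complete asymmetric directed graph on the candidates. -/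
def IsTournament {α : Type} (T : α → α → Prop) : Prop :=
  (∀ a, ¬ T a a) ∧ ∀ a b : α, a ≠ b → (T a b ↔ ¬ T b a)

/-- Winner of an agenda under a tournament: each internal node is won by
whichever child's winner beats the other; the root's candidate wins. -/
noncomputable def winner {α : Type} (T : α → α → Prop) : Agenda α → α
  | .leaf a => a
  | .node l r => if T (winner T l) (winner T r) then winner T l else winner T r

/-- Strict partial order: asymmetric and transitive. -/
def IsSPO {α : Type} (r : α → α → Prop) : Prop :=
  (∀ a b, r a b → ¬ r b a) ∧ (∀ a b c, r a b → r b c → r a c)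

/-- Strict total order. -/
def IsSTO {α : Type} (r : α → α → Prop) : Prop :=
  IsSPO r ∧ ∀ a b : α, a ≠ b → r a b ∨ r b a

/-- An (incomplete) weighted profile: a finite sequence of agents, each with a
positive weight and a strict partial order, the sum of weights being odd. -/
structure Profile (α : Type) where
  agents : List (ℕ × (α → α → Prop))
  pos : ∀ p ∈ agents, 0 < p.1
  spo : ∀ p ∈ agents, IsSPO p.2
  oddSum : Odd (agents.map Prod.fst).sum

/-- Total weight of agents preferring `a` to `b`. -/
noncomputable def prefWeight {α : Type} (P : Profile α) (a b : α) : ℕ :=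
  (P.agents.map (fun p => if p.2 a b then p.1 else 0)).sum

/-- The majority graph of a profile. -/
def maj {α : Type} (P : Profile α) (a b : α) : Prop :=
  prefWeight P b a < prefWeight P a b

/-- `Q` is a completion of `P`: same weights, each agent's partial order is
replaced by a strict total order extending it. -/
def IsCompletion {α : Type} (P Q : Profile α) : Prop :=
  List.Forall₂ (fun p q => p.1 = q.1 ∧ IsSTO q.2 ∧ ∀ a b, p.2 a b → q.2 a b)
    P.agents Q.agents

/-- `T` extends the (incomplete majority) graph `G`. -/
def Extends {α : Type} (G T : α → α → Prop) : Prop := ∀ a b, G a b → T a b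

/-- `A` wins some agenda under `T`. -/
def WinsSome {α : Type} [Fintype α] (T : α → α → Prop) (A : α) : Prop :=
  ∃ t : Agenda α, IsAgenda t ∧ winner T t = A

/-- `A` wins every agenda under `T`. -/
def WinsAll {α : Type} [Fintype α] (T : α → α → Prop) (A : α) : Prop :=
  ∀ t : Agenda α, IsAgenda t → winner T t = A

/-- `A` wins some balanced agenda under `T`. -/
def FWinsSome {α : Type} [Fintype α] (T : α → α → Prop) (A : α) : Prop :=
  ∃ t : Agenda α, IsAgenda t ∧ IsBalanced t ∧ winner T t = A

/-- `A` wins every balanced agenda under `T`. -/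
def FWinsAll {α : Type} [Fintype α] (T : α → α → Prop) (A : α) : Prop :=
  ∀ t : Agenda α, IsAgenda t → IsBalanced t → winner T t = A

/-- Weak possible winner of a profile. -/
def WPp {α : Type} [Fintype α] (P : Profile α) (A : α) : Prop :=
  ∃ Q : Profile α, IsCompletion P Q ∧ WinsSome (maj Q) A

/-- Strong possible winner of a profile. -/
def SPp {α : Type} [Fintype α] (P : Profile α) (A : α) : Prop :=
  ∀ Q : Profile α, IsCompletion P Q → WinsSome (maj Q) A

/-- Weak Condorcet winner of a profile. -/
def WCp {α : Type} [Fintype α] (P : Profile α) (A : α) : Prop :=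
  ∃ Q : Profile α, IsCompletion P Q ∧ WinsAll (maj Q) A

/-- Strong Condorcet winner of a profile. -/
def SCp {α : Type} [Fintype α] (P : Profile α) (A : α) : Prop :=
  ∀ Q : Profile α, IsCompletion P Q → WinsAll (maj Q) A

/-- Weak possible winner of an incomplete majority graph. -/
def WPg {α : Type} [Fintype α] (G : α → α → Prop) (A : α) : Prop :=
  ∃ T : α → α → Prop, IsTournament T ∧ Extends G T ∧ WinsSome T A

/-- Strong possible winner of an incomplete majority graph. -/
def SPg {α : Type} [Fintype α] (G : α → α → Prop) (A : α) : Prop :=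
  ∀ T : α → α → Prop, IsTournament T → Extends G T → WinsSome T A

/-- Weak Condorcet winner of an incomplete majority graph. -/
def WCg {α : Type} [Fintype α] (G : α → α → Prop) (A : α) : Prop :=
  ∃ T : α → α → Prop, IsTournament T ∧ Extends G T ∧ WinsAll T A

/-- Strong Condorcet winner of an incomplete majority graph. -/
def SCg {α : Type} [Fintype α] (G : α → α → Prop) (A : α) : Prop :=
  ∀ T : α → α → Prop, IsTournament T → Extends G T → WinsAll T A

/-- A profile is unweighted if every agent has weight 1. -/
def IsUnweighted {α : Type} (P : Profile α) : Prop :=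
  ∀ p ∈ P.agents, p.1 = 1

/-- `Q` is the unweighted profile corresponding to `P`: each agent of
weight `k` is replaced by `k` agents of weight 1 with the same order. -/
def IsUnwVersion {α : Type} (P Q : Profile α) : Prop :=
  Q.agents = P.agents.flatMap (fun p => List.replicate p.1 (1, p.2))

/-- Fair strong Condorcet winner of a profile (balanced agendas only). -/
def FSCp {α : Type} [Fintype α] (P : Profile α) (A : α) : Prop :=
  ∀ Q : Profile α, IsCompletion P Q → FWinsAll (maj Q) A

/-- Fair weak Condorcet winner of a profile (balanced agendas only). -/
def FWCp {α : Type} [Fintype α] (P : Profile α) (A : α) : Prop :=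
  ∃ Q : Profile α, IsCompletion P Q ∧ FWinsAll (maj Q) A

/-- Fair weak possible winner of a profile (balanced agendas only). -/
def FWPp {α : Type} [Fintype α] (P : Profile α) (A : α) : Prop :=
  ∃ Q : Profile α, IsCompletion P Q ∧ FWinsSome (maj Q) A

/-!
If `A` wins every balanced agenda of a majority graph, then `A` beats every other candidate `B`:
split an enumeration of the candidates that starts with `A, B` recursively into halves of sizes
`⌈n/2⌉` and `⌊n/2⌋`. The leaf depths of the resulting agenda lie between `log₂ n` and `⌈log₂ n⌉`,
so it is balanced, and `A` meets `B` in the first round, so `A` cannot win it unless it beats `B`.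
A candidate beating all others wins every agenda of an asymmetric relation, and a majority graph
is asymmetric; hence the same completion witnesses both `FWC` and `WC`.
-/

namespace Agenda

variable {α : Type}

def ofList (d : α) : List α → Agenda α
  | [] => .leaf d
  | [a] => .leaf a
  | a :: b :: l =>
      .node (ofList d ((a :: b :: l).take ((l.length + 3) / 2)))
            (ofList d ((a :: b :: l).drop ((l.length + 3) / 2)))
  termination_by l => l.length
  decreasing_by all_goals simp only [List.length_take, List.length_drop, List.length_cons]; omega

theorem leaves_ofList (d : α) {l : List α} (hl : l ≠ []) : (ofList d l).leaves = l := by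
  fun_induction ofList d l with
  | case1 => contradiction
  | case2 a => rfl
  | case3 a b l ihl ihr =>
    rw [leaves, ihl (by simp), ihr (by simp; omega), List.take_append_drop]

theorem log_le_and_le_clog_of_mem_depths_ofList (d : α) {l : List α} (hl : l ≠ []) :
    ∀ k ∈ (ofList d l).depths, Nat.log 2 l.length ≤ k ∧ k ≤ Nat.clog 2 l.length := by
  fun_induction ofList d l with
  | case1 => contradiction
  | case2 a => simp [depths]
  | case3 a b l ihl ihr =>
    set m := (l.length + 3) / 2 with hm
    set n := l.length + 2
    have hlen : (a :: b :: l).length = n := rfl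
    simp only [List.length_take, List.length_drop, hlen] at ihl ihr ⊢
    have hleft := ihl (by simp [hm])
    have hright := ihr (by simp [hm]; omega)
    rw [min_eq_left (by omega)] at hleft
    have hclog : Nat.clog 2 n = Nat.clog 2 m + 1 := by
      rw [Nat.clog_of_two_le (by norm_num) (by omega), show (n + 2 - 1) / 2 = m by omega]
    have hlog_half : Nat.log 2 (n / 2) = Nat.log 2 n - 1 := Nat.log_div_base 2 n
    have hlog_left : Nat.log 2 (n / 2) ≤ Nat.log 2 m := Nat.log_mono_right (by omega)
    have hlog_right : Nat.log 2 (n / 2) ≤ Nat.log 2 (n - m) := Nat.log_mono_right (by omega)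
    have hclog_right : Nat.clog 2 (n - m) ≤ Nat.clog 2 m := Nat.clog_mono_right 2 (by omega)
    have hlog_pos : 0 < Nat.log 2 n := Nat.log_pos (by norm_num) (by omega)
    intro k hk
    simp only [depths, List.mem_map, List.mem_append] at hk
    obtain ⟨j, hj | hj, rfl⟩ := hk
    · have := hleft j hj; omega
    · have := hright j hj; omega

theorem isBalanced_ofList (d : α) (l : List α) : IsBalanced (ofList d l) := by
  rcases eq_or_ne l [] with rfl | hl
  · simp [IsBalanced, ofList, depths]
  intro k₁ hk₁ k₂ hk₂
  have h₁ := log_le_and_le_clog_of_mem_depths_ofList d hl k₁ hk₁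
  have h₂ := log_le_and_le_clog_of_mem_depths_ofList d hl k₂ hk₂
  have hclog : Nat.clog 2 l.length ≤ Nat.log 2 l.length + 1 :=
    Nat.clog_le_of_le_pow (Nat.lt_pow_succ_log_self (by norm_num) _).le
  omega

theorem isAgenda_ofList [Fintype α] (d : α) {l : List α} (hl : l.Nodup) (hmem : ∀ a, a ∈ l) :
    IsAgenda (ofList d l) := by
  rw [IsAgenda, leaves_ofList d (List.ne_nil_of_mem (hmem d))]
  exact ⟨hl, hmem⟩

end Agenda

section Winner

variable {α : Type} {T : α → α → Prop}

theorem winner_mem_leaves (T : α → α → Prop) (t : Agenda α) : winner T t ∈ t.leaves := by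
  induction t with
  | leaf a => simp [winner, Agenda.leaves]
  | node l r ihl ihr =>
    rw [winner, Agenda.leaves]
    split
    · exact List.mem_append_left _ ihl
    · exact List.mem_append_right _ ihr

theorem winner_eq_of_forall_beats (hT : ∀ a b, T a b → ¬ T b a) {A : α}
    (hA : ∀ b, b ≠ A → T A b) {t : Agenda α} (ht : A ∈ t.leaves) : winner T t = A := by
  induction t with
  | leaf a => simpa [Agenda.leaves, winner, eq_comm] using ht
  | node l r ihl ihr =>
    rw [winner]
    rcases List.mem_append.1 ht with h | h
    · rw [ihl h]
      by_cases hr : winner T r = A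
      · rw [hr, ite_self]
      · rw [if_pos (hA _ hr)]
    · rw [ihr h]
      by_cases hl : winner T l = A
      · rw [hl, ite_self]
      · rw [if_neg (hT _ _ (hA _ hl))]

theorem winner_ofList_ne (d : α) {A B : α} (hAB : ¬ T A B) {l : List α} (hl : l.Nodup)
    (hpre : [A, B] <+: l) : winner T (Agenda.ofList d l) ≠ A := by
  fun_induction Agenda.ofList d l with
  | case1 => simp at hpre
  | case2 a => simp at hpre
  | case3 a b l ihl ihr =>
    obtain ⟨rfl, rfl⟩ : A = a ∧ B = b := by simpa using hpre
    by_cases hl_nil : l = []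
    · subst hl_nil
      have hBA : B ≠ A := fun h => by simp [h] at hl
      simpa [Agenda.ofList, winner, hAB] using hBA
    have hlen : 0 < l.length := List.length_pos_iff.2 hl_nil
    set m := (l.length + 3) / 2
    have htake : [A, B] <+: (A :: B :: l).take m :=
      List.prefix_take_iff.2 ⟨hpre, by simp; omega⟩
    have hleft := ihl ((List.take_sublist _ _).nodup hl) htake
    have hright : winner T (Agenda.ofList d ((A :: B :: l).drop m)) ≠ A := by
      intro h
      have hmem := winner_mem_leaves T (Agenda.ofList d ((A :: B :: l).drop m))
      rw [Agenda.leaves_ofList _ (by simp; omega), h] at hmem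
      exact List.disjoint_take_drop hl le_rfl (htake.subset (by simp)) hmem
    rw [winner]
    split <;> assumption

end Winner

theorem List.exists_nodup_forall_mem_prefix {α : Type} [Fintype α] {p : List α} (hp : p.Nodup) :
    ∃ l : List α, l.Nodup ∧ (∀ a, a ∈ l) ∧ p <+: l := by
  refine ⟨p ++ (Finset.univ \ p.toFinset).toList, ?_, fun a => ?_, List.prefix_append _ _⟩
  · rw [List.nodup_append]
    refine ⟨hp, Finset.nodup_toList _, fun a ha b hb => ?_⟩
    rintro rfl
    simp_all
  · by_cases ha : a ∈ p <;> simp [ha]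

section Condorcet

variable {α : Type} [Fintype α] {T : α → α → Prop} {A : α}

theorem beats_of_fWinsAll (h : FWinsAll T A) {B : α} (hB : B ≠ A) : T A B := by
  by_contra hAB
  obtain ⟨l, hl, hmem, hpre⟩ :=
    List.exists_nodup_forall_mem_prefix (p := [A, B]) (by simpa using hB.symm)
  exact winner_ofList_ne A hAB hl hpre
    (h _ (Agenda.isAgenda_ofList A hl hmem) (Agenda.isBalanced_ofList A l))

theorem winsAll_of_fWinsAll (hT : ∀ a b, T a b → ¬ T b a) (h : FWinsAll T A) : WinsAll T A :=
  fun _ ht => winner_eq_of_forall_beats hT (fun _ hb => beats_of_fWinsAll h hb) (ht.2 A)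

theorem fWinsAll_of_winsAll (h : WinsAll T A) : FWinsAll T A :=
  fun t ht _ => h t ht

end Condorcet

theorem maj_asymm {α : Type} (Q : Profile α) (a b : α) (h : maj Q a b) : ¬ maj Q b a :=
  lt_asymm h

/-- For an incomplete weighted profile `P`,
the fair weak Condorcet winners coincide with the weak Condorcet
winners: `FWC(P) = WC(P)`. -/
theorem stmt14 {α : Type} [Fintype α] (P : Profile α) :
    ∀ A : α, FWCp P A ↔ WCp P A := by
  intro A
  constructor
  · rintro ⟨Q, hQ, hF⟩
    exact ⟨Q, hQ, winsAll_of_fWinsAll (maj_asymm Q) hF⟩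
  · rintro ⟨Q, hQ, hW⟩
    exact ⟨Q, hQ, fWinsAll_of_winsAll hW⟩
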